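/- For a state ρ of class E₀ with parameters a,b,c,θ, the Horodecki quantity m(ρ) = max over pairs j<k of (u_j+u_k), where u_j are the eigenvalues of T_ρᵀ T_ρ and (T_ρ)_{nm}=tr(ρ σ_n⊗σ_m), equals max(2c², (2(a+b)-1)² + c²). -/

import Mathlib

open Matrix Kronecker Complex ComplexOrder

noncomputable section
open scoped Classical

/-- Pauli matrices. -/
def pauli : Fin 3 → Matrix (Fin 2) (Fin 2) ℂ
  | 0 => !![0, 1; 1, 0]
  | 1 => !![0, -Complex.I; Complex.I, 0]
  | 2 => !![1, 0; 0, -1]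

/-- Kronecker product of two one-qubit operators, reindexed to a 4×4 matrix. -/
def kron4 (A B : Matrix (Fin 2) (Fin 2) ℂ) : Matrix (Fin 4) (Fin 4) ℂ :=
  Matrix.reindex finProdFinEquiv finProdFinEquiv (A ⊗ₖ B)

/-- A density matrix: positive semidefinite with unit trace. -/
def IsDensity {n : ℕ} (ρ : Matrix (Fin n) (Fin n) ℂ) : Prop :=
  ρ.PosSemidef ∧ ρ.trace = 1

/-- The spin-flipped matrix ρ̃ = (σ₂⊗σ₂) ρ̄ (σ₂⊗σ₂). -/
def tildeMat (ρ : Matrix (Fin 4) (Fin 4) ℂ) : Matrix (Fin 4) (Fin 4) ℂ :=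
  kron4 (pauli 1) (pauli 1) * ρ.map (starRingEnd ℂ) * kron4 (pauli 1) (pauli 1)

/-- Positive square root of a positive semidefinite matrix (0 otherwise). -/
def msqrt {n : ℕ} (A : Matrix (Fin n) (Fin n) ℂ) : Matrix (Fin n) (Fin n) ℂ :=
  if h : A.PosSemidef then
    h.1.eigenvectorUnitary.1 * diagonal ((↑) ∘ (√·) ∘ h.1.eigenvalues) *
      (star h.1.eigenvectorUnitary : Matrix (Fin n) (Fin n) ℂ) else 0

/-- ρ̂ = √(√ρ ρ̃ √ρ). -/
def hatMat (ρ : Matrix (Fin 4) (Fin 4) ℂ) : Matrix (Fin 4) (Fin 4) ℂ :=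
  msqrt (msqrt ρ * tildeMat ρ * msqrt ρ)

/-- Eigenvalues of a Hermitian matrix (0 otherwise). -/
def evalsC {n : ℕ} (A : Matrix (Fin n) (Fin n) ℂ) : Fin n → ℝ :=
  if h : A.IsHermitian then h.eigenvalues else 0

/-- The concurrence C(ρ) = max(0, 2 λ_max(ρ̂) − tr ρ̂). -/
def concurrence (ρ : Matrix (Fin 4) (Fin 4) ℂ) : ℝ :=
  max 0 (2 * (⨆ i, evalsC (hatMat ρ) i) - ∑ i, evalsC (hatMat ρ) i)

/-- Correlation matrix T_ρ with entries tr(ρ σₙ⊗σₘ). -/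
def Tmat (ρ : Matrix (Fin 4) (Fin 4) ℂ) : Matrix (Fin 3) (Fin 3) ℝ :=
  fun n m => ((ρ * kron4 (pauli n) (pauli m)).trace).re

/-- U_ρ = T_ρᵀ T_ρ. -/
def Umat (ρ : Matrix (Fin 4) (Fin 4) ℂ) : Matrix (Fin 3) (Fin 3) ℝ :=
  (Tmat ρ)ᵀ * Tmat ρ

/-- Eigenvalues of a real symmetric matrix (0 otherwise). -/
def evalsR {n : ℕ} (A : Matrix (Fin n) (Fin n) ℝ) : Fin n → ℝ :=
  if h : A.IsHermitian then h.eigenvalues else 0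

/-- The Horodecki quantity m(ρ) = max_{j<k} (u_j + u_k). -/
def mval (ρ : Matrix (Fin 4) (Fin 4) ℂ) : ℝ :=
  (Finset.univ.filter (fun p : Fin 3 × Fin 3 => p.1 < p.2)).sup'
    (by decide) (fun p => evalsR (Umat ρ) p.1 + evalsR (Umat ρ) p.2)

/-- Normalized linear entropy S_L(ρ) = (4/3)(1 − tr ρ²). -/
def linEntropy (ρ : Matrix (Fin 4) (Fin 4) ℂ) : ℝ :=
  (4/3) * (1 - ((ρ * ρ).trace).re)

/-- The class E₀ state with parameters a, b, c, θ. -/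
def rhoE0 (a b c θ : ℝ) : Matrix (Fin 4) (Fin 4) ℂ :=
  !![0, 0, 0, 0;
     0, (a : ℂ), (c/2 : ℂ) * Complex.exp (θ * Complex.I), 0;
     0, (c/2 : ℂ) * Complex.exp (-θ * Complex.I), (b : ℂ), 0;
     0, 0, 0, ((1 - a - b : ℝ) : ℂ)]

/-- The maximal-CHSH-violation states ρ_MVB. -/
def rhoMVB (β θ : ℝ) : Matrix (Fin 4) (Fin 4) ℂ :=
  rhoE0 (1/2) (1/2) (Real.sqrt (β - 1)) θ

lemma Tmat_rhoE0 (a b c θ : ℝ) : Tmat (rhoE0 a b c θ) =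
    !![c*Real.cos θ, c*Real.sin θ, 0; -(c*Real.sin θ), c*Real.cos θ, 0; 0, 0, 1-2*(a+b)] := by
  have h1 : (Complex.exp ((θ:ℂ) * Complex.I)).re = Real.cos θ := Complex.exp_ofReal_mul_I_re θ
  have h2 : (Complex.exp ((θ:ℂ) * Complex.I)).im = Real.sin θ := Complex.exp_ofReal_mul_I_im θ
  have h3 : (Complex.exp (-((θ:ℂ) * Complex.I))).re = Real.cos θ := by
    rw [show -((θ:ℂ)*Complex.I) = ((-θ:ℝ):ℂ)*Complex.I by push_cast; ring,
      Complex.exp_ofReal_mul_I_re]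
    simp
  have h4 : (Complex.exp (-((θ:ℂ) * Complex.I))).im = -Real.sin θ := by
    rw [show -((θ:ℂ)*Complex.I) = ((-θ:ℝ):ℂ)*Complex.I by push_cast; ring,
      Complex.exp_ofReal_mul_I_im]
    simp
  ext n m
  fin_cases n <;> fin_cases m <;>
    simp [Tmat, rhoE0, kron4, pauli, finProdFinEquiv, Fin.divNat, Fin.modNat,
      show (((0:Fin 4):ℕ))=0 from rfl, show (((1:Fin 4):ℕ))=1 from rfl,
      show (((2:Fin 4):ℕ))=2 from rfl, show (((3:Fin 4):ℕ))=3 from rfl,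
      Matrix.vecHead, Matrix.vecTail, Matrix.reindex_apply, Matrix.submatrix_apply,
      Matrix.trace, Matrix.diag, Matrix.vecMul, dotProduct, Matrix.mul_apply,
      Fin.sum_univ_four, h1, h2, h3, h4] <;>
    ring

lemma Umat_rhoE0 (a b c θ : ℝ) : Umat (rhoE0 a b c θ) =
    Matrix.diagonal ![c^2, c^2, (2*(a+b)-1)^2] := by
  rw [Umat, Tmat_rhoE0]
  ext i j
  fin_cases i <;> fin_cases j <;>
    simp [Matrix.mul_apply, Matrix.transpose_apply, Fin.sum_univ_three, Matrix.diagonal,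
      Matrix.vecHead, Matrix.vecTail] <;>
    nlinarith [Real.sin_sq_add_cos_sq θ]

lemma sum_evals_eq_trace {n : ℕ} {A : Matrix (Fin n) (Fin n) ℝ} (hA : A.IsHermitian) :
    ∑ i, hA.eigenvalues i = A.trace := by
  have h := hA.spectral_theorem
  have hstar : (star (hA.eigenvectorUnitary : Matrix (Fin n) (Fin n) ℝ)) *
      (hA.eigenvectorUnitary : Matrix (Fin n) (Fin n) ℝ) = 1 := hA.eigenvectorUnitary.2.1
  calc ∑ i, hA.eigenvalues i
      = (Matrix.diagonal ((RCLike.ofReal : ℝ → ℝ) ∘ hA.eigenvalues)).trace := by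
        simp [Matrix.trace_diagonal]
    _ = A.trace := by
        conv_rhs => rw [h, Unitary.conjStarAlgAut_apply]
        rw [Matrix.trace_mul_cycle, hstar, Matrix.one_mul]

lemma max_pairs_aux (u v e0 e1 e2 : ℝ) (h0 : e0 = u ∨ e0 = v) (h1 : e1 = u ∨ e1 = v)
    (h2 : e2 = u ∨ e2 = v) (hsum : e0 + e1 + e2 = u + u + v) :
    max (e0+e1) (max (e0+e2) (e1+e2)) = max (2*u) (u+v) := by
  apply le_antisymm
  · apply max_le
    · rcases h2 with h|h
      · exact le_max_of_le_right (by linarith)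
      · exact le_max_of_le_left (by linarith)
    · apply max_le
      · rcases h1 with h|h
        · exact le_max_of_le_right (by linarith)
        · exact le_max_of_le_left (by linarith)
      · rcases h0 with h|h
        · exact le_max_of_le_right (by linarith)
        · exact le_max_of_le_left (by linarith)
  · apply max_le <;>
      rcases h0 with h0|h0 <;> rcases h1 with h1|h1 <;> rcases h2 with h2|h2 <;>
        first
          | exact le_max_of_le_left (by linarith)
          | exact le_max_of_le_right (le_max_of_le_left (by linarith))
          | exact le_max_of_le_right (le_max_of_le_right (by linarith))

/-- the Horodecki quantity m(ρ) for a class-E₀ state. -/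
theorem mval_rhoE0 (a b c θ : ℝ) (ha : 0 ≤ a) (hb : 0 ≤ b)
    (hab : a + b ≤ 1) (hc0 : 0 ≤ c) (hc1 : c ≤ 1) (habc : c ^ 2 / 4 ≤ a * b) :
    mval (rhoE0 a b c θ) = max (2 * c ^ 2) ((2 * (a + b) - 1) ^ 2 + c ^ 2) := by
  have hU : Umat (rhoE0 a b c θ) = Matrix.diagonal ![c^2, c^2, (2*(a+b)-1)^2] :=
    Umat_rhoE0 a b c θ
  have hHerm : (Umat (rhoE0 a b c θ)).IsHermitian := by
    rw [hU]; exact Matrix.isHermitian_diagonal _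
  have hev : evalsR (Umat (rhoE0 a b c θ)) = hHerm.eigenvalues := by
    unfold evalsR; rw [dif_pos hHerm]
  have hspec : spectrum ℝ (Umat (rhoE0 a b c θ)) = Set.range ![c^2, c^2, (2*(a+b)-1)^2] := by
    rw [hU, spectrum_diagonal]
  have hmem : ∀ i, evalsR (Umat (rhoE0 a b c θ)) i = c^2 ∨
      evalsR (Umat (rhoE0 a b c θ)) i = (2*(a+b)-1)^2 := by
    intro i
    have h := hHerm.eigenvalues_mem_spectrum_real i
    rw [hspec] at h
    obtain ⟨j, hj⟩ := h
    rw [hev]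
    fin_cases j <;> simp only [Matrix.cons_val_zero, Matrix.cons_val_one, Matrix.head_cons,
      Matrix.cons_val_two, Matrix.tail_cons] at hj <;> rw [← hj] <;> tauto
  have hsum : evalsR (Umat (rhoE0 a b c θ)) 0 + evalsR (Umat (rhoE0 a b c θ)) 1 +
      evalsR (Umat (rhoE0 a b c θ)) 2 = c^2 + c^2 + (2*(a+b)-1)^2 := by
    have htr : (Umat (rhoE0 a b c θ)).trace = c^2 + c^2 + (2*(a+b)-1)^2 := by
      rw [hU, Matrix.trace_diagonal]
      simp [Fin.sum_univ_three]
    have h := (sum_evals_eq_trace hHerm).trans htr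
    rw [Fin.sum_univ_three] at h
    rw [hev]
    exact h
  have hm : mval (rhoE0 a b c θ) =
      max (evalsR (Umat (rhoE0 a b c θ)) 0 + evalsR (Umat (rhoE0 a b c θ)) 1)
        (max (evalsR (Umat (rhoE0 a b c θ)) 0 + evalsR (Umat (rhoE0 a b c θ)) 2)
          (evalsR (Umat (rhoE0 a b c θ)) 1 + evalsR (Umat (rhoE0 a b c θ)) 2)) := by
    apply le_antisymm
    · apply Finset.sup'_le
      intro p hp
      rw [Finset.mem_filter] at hp
      fin_cases p <;>
        first
          | (exact absurd hp.2 (by decide))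
          | exact le_max_left _ _
          | exact le_max_of_le_right (le_max_left _ _)
          | exact le_max_of_le_right (le_max_right _ _)
    · apply max_le
      · exact Finset.le_sup'
          (fun p : Fin 3 × Fin 3 =>
            evalsR (Umat (rhoE0 a b c θ)) p.1 + evalsR (Umat (rhoE0 a b c θ)) p.2)
          (Finset.mem_filter.mpr ⟨Finset.mem_univ ((0:Fin 3), (1:Fin 3)), by decide⟩)
      · apply max_le
        · exact Finset.le_sup'
            (fun p : Fin 3 × Fin 3 =>
              evalsR (Umat (rhoE0 a b c θ)) p.1 + evalsR (Umat (rhoE0 a b c θ)) p.2)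
            (Finset.mem_filter.mpr ⟨Finset.mem_univ ((0:Fin 3), (2:Fin 3)), by decide⟩)
        · exact Finset.le_sup'
            (fun p : Fin 3 × Fin 3 =>
              evalsR (Umat (rhoE0 a b c θ)) p.1 + evalsR (Umat (rhoE0 a b c θ)) p.2)
            (Finset.mem_filter.mpr ⟨Finset.mem_univ ((1:Fin 3), (2:Fin 3)), by decide⟩)
  rw [hm, max_pairs_aux (c^2) ((2*(a+b)-1)^2) _ _ _ (hmem 0) (hmem 1) (hmem 2) hsum]
  congr 1
  ring

end
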